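/- arXiv:2112.11744 — 2 statements merged into one kernel-verified Lean document; each statement's English description precedes it below -/
import Mathlib

section
/- Let G be a topologically simple topological group, φ : G → H a continuous homomorphism to a topological group H, and (aᵢ) a sequence in G whose contraction group con((aᵢ)) := {x ∈ G : aᵢ x aᵢ⁻¹ → 1} is nontrivial. If the sequence (φ(aᵢ)) converges in H and H is Hausdorff, then φ is the trivial homomorphism. -/
open Filter

theorem MonoidHom.isClosed_ker {G H : Type*} [Group G] [TopologicalSpace G] [Group H]
    [TopologicalSpace H] [T1Space H] (φ : G →* H) (hφ : Continuous φ) :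
    IsClosed (φ.ker : Set G) :=
  isClosed_singleton.preimage hφ

theorem MonoidHom.map_eq_one_of_tendsto_conj {G H : Type*} [Group G] [TopologicalSpace G]
    [Group H] [TopologicalSpace H] [IsTopologicalGroup H] [T2Space H]
    (φ : G →* H) (hφ : ContinuousAt φ 1) {a : ℕ → G} {x : G}
    (hcon : Tendsto (fun i => a i * x * (a i)⁻¹) atTop (nhds 1))
    {h : H} (hconv : Tendsto (fun i => φ (a i)) atTop (nhds h)) :
    φ x = 1 := by
  have to_one : Tendsto (fun i => φ (a i * x * (a i)⁻¹)) atTop (nhds 1) := by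
    simpa only [Function.comp_def, map_one] using hφ.tendsto.comp hcon
  have to_conj : Tendsto (fun i => φ (a i * x * (a i)⁻¹)) atTop (nhds (h * φ x * h⁻¹)) := by
    simp only [map_mul, map_inv]
    exact (hconv.mul tendsto_const_nhds).mul hconv.inv
  have hconj : h * φ x * h⁻¹ = 1 := tendsto_nhds_unique to_conj to_one
  exact conj_eq_one_iff.mp hconj

theorem stmt6_general {G H : Type*} [Group G] [TopologicalSpace G]
    [Group H] [TopologicalSpace H] [IsTopologicalGroup H] [T2Space H]
    (hsimple : ∀ N : Subgroup G, N.Normal → IsClosed (N : Set G) → N = ⊥ ∨ N = ⊤)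
    (φ : G →* H) (hφ : Continuous φ)
    (a : ℕ → G) (x : G) (hx : x ≠ 1)
    (hcon : Tendsto (fun i => a i * x * (a i)⁻¹) atTop (nhds 1))
    (h : H) (hconv : Tendsto (fun i => φ (a i)) atTop (nhds h)) :
    ∀ g : G, φ g = 1 := by
  have hx_ker : x ∈ φ.ker := φ.map_eq_one_of_tendsto_conj hφ.continuousAt hcon hconv
  have hker_ne_bot : φ.ker ≠ ⊥ := fun hbot => hx (by simpa [hbot] using hx_ker)
  have hker_top : φ.ker = ⊤ :=
    (hsimple φ.ker inferInstance (φ.isClosed_ker hφ)).resolve_left hker_ne_bot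
  exact fun g => φ.mem_ker.mp (hker_top ▸ Subgroup.mem_top g)

theorem stmt6 {G H : Type*} [Group G] [TopologicalSpace G] [IsTopologicalGroup G]
    [Group H] [TopologicalSpace H] [IsTopologicalGroup H] [T2Space H]
    (hsimple : ∀ N : Subgroup G, N.Normal → IsClosed (N : Set G) → N = ⊥ ∨ N = ⊤)
    (φ : G →* H) (hφ : Continuous φ)
    (a : ℕ → G) (x : G) (hx : x ≠ 1)
    (hcon : Tendsto (fun i => a i * x * (a i)⁻¹) atTop (nhds 1))
    (h : H) (hconv : Tendsto (fun i => φ (a i)) atTop (nhds h)) :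
    ∀ g : G, φ g = 1 :=
  stmt6_general hsimple φ hφ a x hx hcon h hconv
end

section
/- In GL₂(ℚ_p), let hₙ := [[pⁿ, 0],[p^{⌈n/3⌉}, 1]]. If h = [[a,b],[c,d]] ∈ GL₂(ℚ_p) satisfies hₙ h hₙ⁻¹ → λₙ·I for some scalars λₙ (i.e., the image of hₙ h hₙ⁻¹ in PGL₂(ℚ_p) converges to the identity), then b = c = 0 and a = d, i.e., h is scalar. -/
/-!
Conjugating `M = [[a, b], [c, d]]` by `[[x, 0], [y, 1]]` gives
`[[a - y b, x b], [x⁻¹ (y (a - d) + c - y² b), y b + d]]`.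
If this is asymptotically scalar while `y → 0` and `‖x‖ ≤ ‖y‖²`, the difference of the diagonal
entries tends to `a - d`, so `a = d`; then `c - y² b = x · (lower-left entry) → 0` gives `c = 0`;
finally the lower-left entry is `-(x⁻¹ y²) b` with `‖x⁻¹ y²‖ ≥ 1`, so `b = 0`.
For `x = pⁿ`, `y = p^⌈n/3⌉` in `ℚ_p` we have `‖x‖ = p⁻ⁿ ≤ p^(-2⌈n/3⌉) = ‖y‖²` once `n ≥ 2`.
-/

open Filter Topology

theorem tendsto_zero_of_tendsto_mul_of_one_le_norm {α K : Type*} [NormedDivisionRing K]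
    {l : Filter α} {u x : α → K} (hu : ∀ᶠ t in l, 1 ≤ ‖u t‖)
    (h : Tendsto (fun t => u t * x t) l (𝓝 0)) : Tendsto x l (𝓝 0) := by
  refine squeeze_zero_norm' ?_ (by simpa using h.norm)
  filter_upwards [hu] with t ht
  exact le_mul_of_one_le_left (norm_nonneg _) ht

namespace Matrix

theorem fin_two_lower_mul_mul_inv {K : Type*} [Field K] {x : K} (hx : x ≠ 0) (y : K)
    (M : Matrix (Fin 2) (Fin 2) K) :
    !![x, 0; y, 1] * M * !![x, 0; y, 1]⁻¹ =
      !![M 0 0 - y * M 0 1, x * M 0 1;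
        x⁻¹ * (y * (M 0 0 - M 1 1) + M 1 0 - y ^ 2 * M 0 1), y * M 0 1 + M 1 1] := by
  have : Invertible !![x, 0; y, 1] := invertibleOfIsUnitDet _ (by simpa using hx)
  rw [mul_inv_eq_iff_eq_mul_of_invertible, eta_fin_two M]
  ext i j
  fin_cases i <;> fin_cases j <;> simp <;> field_simp <;> ring

section
variable {α ι R : Type*} [DecidableEq ι] [Ring R] [TopologicalSpace R]
  {l : Filter α} {A : α → Matrix ι ι R} {c : α → R}

theorem tendsto_apply_of_tendsto_sub_smul_one
    (h : Tendsto (fun t => A t - c t • 1) l (𝓝 0)) {i j : ι} (hij : i ≠ j) :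
    Tendsto (fun t => A t i j) l (𝓝 0) := by
  simpa [Function.comp_def, one_apply_ne hij] using
    (continuous_id.matrix_elem i j).tendsto 0 |>.comp h

theorem tendsto_sub_diag_of_tendsto_sub_smul_one [ContinuousSub R]
    (h : Tendsto (fun t => A t - c t • 1) l (𝓝 0)) (i j : ι) :
    Tendsto (fun t => A t i i - A t j j) l (𝓝 0) := by
  have hi := (continuous_id.matrix_elem i i).tendsto 0 |>.comp h
  have hj := (continuous_id.matrix_elem j j).tendsto 0 |>.comp h
  simpa [Function.comp_def] using hi.sub hj

end

theorem fin_two_eq_scalar_of_tendsto_lower_conj {α K : Type*} [NormedField K]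
    {l : Filter α} [l.NeBot] {x y : α → K} (hx : ∀ t, x t ≠ 0) (hy : Tendsto y l (𝓝 0))
    (hxy : ∀ᶠ t in l, ‖x t‖ ≤ ‖y t‖ ^ 2) (M : Matrix (Fin 2) (Fin 2) K) (c : α → K)
    (h : Tendsto (fun t => !![x t, 0; y t, 1] * M * !![x t, 0; y t, 1]⁻¹ - c t • 1) l (𝓝 0)) :
    M 0 1 = 0 ∧ M 1 0 = 0 ∧ M 0 0 = M 1 1 := by
  simp only [fin_two_lower_mul_mul_inv (hx _)] at h
  have hdiag := tendsto_sub_diag_of_tendsto_sub_smul_one h 0 1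
  have hlow := tendsto_apply_of_tendsto_sub_smul_one h (i := 1) (j := 0) (by decide)
  simp only [of_apply, cons_val', cons_val_zero, cons_val_one, empty_val', cons_val_fin_one]
    at hdiag hlow
  have hx0 : Tendsto x l (𝓝 0) := by
    refine squeeze_zero_norm' hxy ?_
    simpa using (hy.norm.pow 2)
  have had : M 0 0 = M 1 1 := by
    have := hdiag.add ((hy.const_mul 2).mul_const (M 0 1))
    rw [mul_zero, zero_mul, add_zero] at this
    replace this : Tendsto (fun _ : α => M 0 0 - M 1 1) l (𝓝 0) := this.congr fun t => by ring
    exact sub_eq_zero.1 (tendsto_const_nhds_iff.1 this)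
  simp only [had, sub_self, mul_zero, zero_add] at hlow
  have hc : M 1 0 = 0 := by
    have := (hx0.mul hlow).add ((hy.pow 2).mul_const (M 0 1))
    rw [zero_mul, zero_pow two_ne_zero, zero_mul, add_zero] at this
    refine tendsto_const_nhds_iff.1 (this.congr fun t => ?_)
    rw [mul_inv_cancel_left₀ (hx t)]
    ring
  simp only [hc, zero_sub] at hlow
  have hb : Tendsto (fun _ : α => M 0 1) l (𝓝 0) := by
    refine tendsto_zero_of_tendsto_mul_of_one_le_norm (u := fun t => (x t)⁻¹ * y t ^ 2) ?_ ?_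
    · filter_upwards [hxy] with t ht
      rw [norm_mul, norm_inv, norm_pow, inv_mul_eq_div, one_le_div (norm_pos_iff.2 (hx t))]
      exact ht
    · simpa [mul_assoc] using hlow.neg
  exact ⟨tendsto_const_nhds_iff.1 hb, hc, had⟩

end Matrix

theorem stmt11_general (p : ℕ) [Fact p.Prime] (M : Matrix (Fin 2) (Fin 2) ℚ_[p])
    (h : ℕ → Matrix (Fin 2) (Fin 2) ℚ_[p])
    (hdef : ∀ n, h n = !![(p : ℚ_[p]) ^ n, 0; (p : ℚ_[p]) ^ ((n + 2) / 3), 1])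
    (lam : ℕ → ℚ_[p])
    (hconv : Tendsto
      (fun n => h n * M * (h n)⁻¹ - lam n • (1 : Matrix (Fin 2) (Fin 2) ℚ_[p]))
      atTop (nhds 0)) :
    M 0 1 = 0 ∧ M 1 0 = 0 ∧ M 0 0 = M 1 1 := by
  obtain rfl : h = _ := funext hdef
  have hp : (p : ℚ_[p]) ≠ 0 := Nat.cast_ne_zero.2 (Fact.out : p.Prime).ne_zero
  have hk : Tendsto (fun n : ℕ => (n + 2) / 3) atTop atTop :=
    tendsto_atTop_atTop.2 fun B => ⟨3 * B, fun n hn => by omega⟩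
  refine Matrix.fin_two_eq_scalar_of_tendsto_lower_conj (fun n => pow_ne_zero n hp)
    ((tendsto_pow_atTop_nhds_zero_of_norm_lt_one Padic.norm_p_lt_one).comp hk) ?_ M lam hconv
  filter_upwards [eventually_ge_atTop 2] with n hn
  rw [Function.comp_apply, norm_pow, norm_pow, ← pow_mul]
  exact pow_le_pow_of_le_one (norm_nonneg _) Padic.norm_p_lt_one.le (by omega)

theorem stmt11 (p : ℕ) [Fact p.Prime] (M : Matrix (Fin 2) (Fin 2) ℚ_[p])
    (hM : IsUnit M.det)
    (h : ℕ → Matrix (Fin 2) (Fin 2) ℚ_[p])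
    (hdef : ∀ n, h n = !![(p : ℚ_[p]) ^ n, 0; (p : ℚ_[p]) ^ ((n + 2) / 3), 1])
    (lam : ℕ → ℚ_[p])
    (hconv : Tendsto
      (fun n => h n * M * (h n)⁻¹ - lam n • (1 : Matrix (Fin 2) (Fin 2) ℚ_[p]))
      atTop (nhds 0)) :
    M 0 1 = 0 ∧ M 1 0 = 0 ∧ M 0 0 = M 1 1 :=
  stmt11_general p M h hdef lam hconv
end
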